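/- Let v_1,…,v_d be square-integrable random variables with Var(v_i) = 1 for all i, and let v̂_1,…,v̂_d be another collection of square-integrable random variables. Write s_{ij} = Cov(v_i, v_j), ŝ_{ij} = Cov(v̂_i, v̂_j), r_{ij} = Cor(v_i, v_j) = s_{ij}, and r̂_{ij} = ŝ_{ij}/√(ŝ_{ii} ŝ_{jj}) (assuming ŝ_{ii} > 0 for all i). Then max_{i,j} |r̂_{ij} - r_{ij}| ≤ 2 max_{i,j} |ŝ_{ij} - s_{ij}|. -/

import Mathlib

open MeasureTheory

/-- Covariance of two real random variables: `Cov(X,Y) = E[XY] - E[X]E[Y]`. -/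
noncomputable def cov {Ω : Type*} [MeasurableSpace Ω] (μ : Measure Ω) (X Y : Ω → ℝ) : ℝ :=
  (∫ ω, X ω * Y ω ∂μ) - (∫ ω, X ω ∂μ) * (∫ ω, Y ω ∂μ)

/-! By Cauchy–Schwarz `|ŝᵢⱼ| ≤ gᵢⱼ := √(ŝᵢᵢ ŝⱼⱼ)`, so `r̂ᵢⱼ = ŝᵢⱼ / gᵢⱼ` has modulus at most one
and `r̂ᵢⱼ - rᵢⱼ = r̂ᵢⱼ (1 - gᵢⱼ) + (ŝᵢⱼ - sᵢⱼ)`. Since `sᵢᵢ = 1`, the variances `ŝᵢᵢ, ŝⱼⱼ` are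
within `ε = maxᵢⱼ |ŝᵢⱼ - sᵢⱼ|` of `1`, hence so is their geometric mean `gᵢⱼ`, and both terms
are at most `ε`. -/

namespace ProbabilityTheory

variable {Ω : Type*} {mΩ : MeasurableSpace Ω} {μ : Measure Ω} {X Y : Ω → ℝ}

variable (X μ) in
lemma covariance_self_nonneg : 0 ≤ cov[X, X; μ] :=
  integral_nonneg fun _ => mul_self_nonneg _

/-- Cauchy–Schwarz: the quadratic `t ↦ cov[tX + Y, tX + Y]` is nonnegative, so its
discriminant is nonpositive. -/
lemma sq_covariance_le_mul_covariance_self [IsFiniteMeasure μ] (hX : MemLp X 2 μ)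
    (hY : MemLp Y 2 μ) : cov[X, Y; μ] ^ 2 ≤ cov[X, X; μ] * cov[Y, Y; μ] := by
  have hquad : ∀ t : ℝ,
      0 ≤ cov[X, X; μ] * (t * t) + 2 * cov[X, Y; μ] * t + cov[Y, Y; μ] := by
    intro t
    have htX : MemLp (t • X) 2 μ := hX.const_smul t
    have h := covariance_self_nonneg μ (t • X + Y)
    rw [covariance_add_left htX hY (htX.add hY), covariance_add_right htX htX hY,
      covariance_add_right hY htX hY, covariance_smul_left, covariance_smul_right,
      covariance_smul_left, covariance_smul_right, covariance_comm Y X] at h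
    linarith
  have hdiscrim := discrim_le_zero hquad
  rw [discrim] at hdiscrim
  linarith

end ProbabilityTheory

open ProbabilityTheory

lemma cov_eq_covariance {Ω : Type*} [MeasurableSpace Ω] {μ : Measure Ω} [IsProbabilityMeasure μ]
    {X Y : Ω → ℝ} (hX : MemLp X 2 μ) (hY : MemLp Y 2 μ) : cov μ X Y = cov[X, Y; μ] := by
  rw [covariance_eq_sub hX hY]
  rfl

/-- The geometric mean `√(ab)` lies between `a` and `b`, and `|1 - x|` is convex. -/
lemma abs_one_sub_sqrt_mul_le {a b : ℝ} (ha : 0 ≤ a) (hb : 0 ≤ b) :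
    |1 - √(a * b)| ≤ max |1 - a| |1 - b| := by
  wlog hab : a ≤ b generalizing a b
  · rw [mul_comm, max_comm]
    exact this hb ha (le_of_not_ge hab)
  have hlower : a ≤ √(a * b) := Real.le_sqrt_of_sq_le (by nlinarith)
  have hupper : √(a * b) ≤ b := Real.sqrt_le_iff.2 ⟨hb, by nlinarith⟩
  rw [max_comm]
  exact abs_le_max_abs_abs (by linarith) (by linarith)

lemma abs_div_sub_le {t s g : ℝ} (ht : |t| ≤ g) : |t / g - s| ≤ |1 - g| + |t - s| := by
  rcases (abs_nonneg t).trans ht |>.eq_or_lt with hg | hg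
  · subst hg
    have : t = 0 := abs_nonpos_iff.1 ht
    simp [this]
  have hr : |t / g| ≤ 1 := by
    rw [abs_div, abs_of_pos hg]
    exact div_le_one_of_le₀ ht hg.le
  calc |t / g - s| = |t / g * (1 - g) + (t - s)| := by
        congr 1; field_simp; ring
    _ ≤ |t / g| * |1 - g| + |t - s| := by rw [← abs_mul]; exact abs_add_le _ _
    _ ≤ |1 - g| + |t - s| := by gcongr; exact mul_le_of_le_one_left (abs_nonneg _) hr

lemma abs_div_sqrt_mul_sub_le {a b t s ε : ℝ} (ha : 0 ≤ a) (hb : 0 ≤ b) (hts : t ^ 2 ≤ a * b)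
    (hε : |t - s| ≤ ε) (haε : |a - 1| ≤ ε) (hbε : |b - 1| ≤ ε) :
    |t / √(a * b) - s| ≤ 2 * ε := by
  have hsqrt : |1 - √(a * b)| ≤ ε := by
    refine (abs_one_sub_sqrt_mul_le ha hb).trans (max_le ?_ ?_) <;> rwa [abs_sub_comm]
  calc |t / √(a * b) - s| ≤ |1 - √(a * b)| + |t - s| := abs_div_sub_le (Real.abs_le_sqrt hts)
    _ ≤ 2 * ε := by linarith

theorem max_cor_diff_le_two_max_cov_diff_general
    {Ω : Type*} [MeasurableSpace Ω] (μ : Measure Ω) [IsProbabilityMeasure μ]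
    {d : ℕ} [NeZero d] (v vhat : Fin d → Ω → ℝ)
    (hvhat2 : ∀ i, MemLp (vhat i) 2 μ)
    (hvar : ∀ i, cov μ (v i) (v i) = 1) :
    (Finset.univ.sup' Finset.univ_nonempty
        (fun q : Fin d × Fin d =>
          |cov μ (vhat q.1) (vhat q.2) /
              Real.sqrt (cov μ (vhat q.1) (vhat q.1) * cov μ (vhat q.2) (vhat q.2)) -
            cov μ (v q.1) (v q.2)|)) ≤
      2 * Finset.univ.sup' Finset.univ_nonempty
        (fun q : Fin d × Fin d => |cov μ (vhat q.1) (vhat q.2) - cov μ (v q.1) (v q.2)|) := by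
  set ε := Finset.univ.sup' Finset.univ_nonempty
    fun q : Fin d × Fin d => |cov μ (vhat q.1) (vhat q.2) - cov μ (v q.1) (v q.2)|
  have hcov_le (i j : Fin d) : |cov μ (vhat i) (vhat j) - cov μ (v i) (v j)| ≤ ε :=
    Finset.le_sup' (fun q : Fin d × Fin d =>
      |cov μ (vhat q.1) (vhat q.2) - cov μ (v q.1) (v q.2)|) (Finset.mem_univ (i, j))
  have hvar_le (i : Fin d) : |cov μ (vhat i) (vhat i) - 1| ≤ ε := hvar i ▸ hcov_le i i
  have hvar_nonneg (i : Fin d) : 0 ≤ cov μ (vhat i) (vhat i) := by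
    rw [cov_eq_covariance (hvhat2 i) (hvhat2 i)]
    exact covariance_self_nonneg _ _
  have hcauchy (i j : Fin d) :
      cov μ (vhat i) (vhat j) ^ 2 ≤ cov μ (vhat i) (vhat i) * cov μ (vhat j) (vhat j) := by
    simp only [cov_eq_covariance (hvhat2 _) (hvhat2 _)]
    exact sq_covariance_le_mul_covariance_self (hvhat2 i) (hvhat2 j)
  exact Finset.sup'_le _ _ fun ⟨i, j⟩ _ => abs_div_sqrt_mul_sub_le (hvar_nonneg i)
    (hvar_nonneg j) (hcauchy i j) (hcov_le i j) (hvar_le i) (hvar_le j)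

/-- If `Var(v_i) = 1` for all `i`, `ŝ_{ij} = Cov(v̂_i, v̂_j)` with `ŝ_{ii} > 0`,
`s_{ij} = Cov(v_i, v_j) = r_{ij}` and `r̂_{ij} = ŝ_{ij}/√(ŝ_{ii} ŝ_{jj})`, then
`max_{i,j} |r̂_{ij} - r_{ij}| ≤ 2 max_{i,j} |ŝ_{ij} - s_{ij}|`. -/
theorem max_cor_diff_le_two_max_cov_diff
    {Ω : Type*} [MeasurableSpace Ω] (μ : Measure Ω) [IsProbabilityMeasure μ]
    {d : ℕ} [NeZero d] (v vhat : Fin d → Ω → ℝ)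
    (hv2 : ∀ i, MemLp (v i) 2 μ) (hvhat2 : ∀ i, MemLp (vhat i) 2 μ)
    (hvar : ∀ i, cov μ (v i) (v i) = 1)
    (hvarhat : ∀ i, 0 < cov μ (vhat i) (vhat i)) :
    (Finset.univ.sup' Finset.univ_nonempty
        (fun q : Fin d × Fin d =>
          |cov μ (vhat q.1) (vhat q.2) /
              Real.sqrt (cov μ (vhat q.1) (vhat q.1) * cov μ (vhat q.2) (vhat q.2)) -
            cov μ (v q.1) (v q.2)|)) ≤
      2 * Finset.univ.sup' Finset.univ_nonempty
        (fun q : Fin d × Fin d => |cov μ (vhat q.1) (vhat q.2) - cov μ (v q.1) (v q.2)|) :=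
  max_cor_diff_le_two_max_cov_diff_general μ v vhat hvhat2 hvar
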